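/- Let n ≥ 1, let c : Fin n → ℝ with c k > 0 for every k, and let F > 0. If f : Fin n → ℝ is feasible (f k > 0 for all k and ∑ k, f k ≤ F) and achieves the optimal maximum latency, i.e. c k / f k ≤ (∑ i, c i) / F for every k, then f is the fairness allocation: f k = (c k / ∑ i, c i) · F for every k. In particular all latencies are equal at the optimum and the capacity constraint is tight, ∑ k, f k = F. -/
import Mathlib


/-- Any feasible allocation achieving the optimal maximum latency
`(∑ i, c i) / F` must be the fairness allocation, and it uses the full capacity. -/
theorem optimal_allocation_is_fairness_allocation (n : ℕ) (hn : 1 ≤ n)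
    (c : Fin n → ℝ) (hc : ∀ k, 0 < c k) (F : ℝ) (hF : 0 < F)
    (f : Fin n → ℝ) (hf : ∀ k, 0 < f k) (hsum : ∑ k, f k ≤ F)
    (hopt : ∀ k, c k / f k ≤ (∑ i, c i) / F) :
    (∀ k, f k = (c k / ∑ i, c i) * F) ∧ (∑ k, f k = F) := by
  have hS : 0 < ∑ i, c i :=
    Finset.sum_pos (fun i _ => hc i) ⟨⟨0, hn⟩, Finset.mem_univ _⟩
  have hlb : ∀ k, (c k / ∑ i, c i) * F ≤ f k := by
    intro k
    have h := hopt k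
    rw [div_le_div_iff₀ (hf k) hF] at h
    rw [div_mul_eq_mul_div, div_le_iff₀ hS]
    linarith
  have hge : F ≤ ∑ k, f k := by
    calc F = ∑ k, (c k / ∑ i, c i) * F := by
            rw [← Finset.sum_mul, ← Finset.sum_div, div_self hS.ne', one_mul]
      _ ≤ ∑ k, f k := Finset.sum_le_sum fun k _ => hlb k
  have heq : ∑ k, f k = F := le_antisymm hsum hge
  refine ⟨fun k => ?_, heq⟩
  by_contra hne
  have hlt : (c k / ∑ i, c i) * F < f k := lt_of_le_of_ne (hlb k) (Ne.symm hne)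
  have : F < ∑ k, f k := by
    calc F = ∑ j, (c j / ∑ i, c i) * F := by
            rw [← Finset.sum_mul, ← Finset.sum_div, div_self hS.ne', one_mul]
      _ < ∑ j, f j := Finset.sum_lt_sum (fun j _ => hlb j) ⟨k, Finset.mem_univ _, hlt⟩
  linarith
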